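/- arXiv:math/0206176 — 4 statements merged into one kernel-verified Lean document; each statement's English description precedes it below -/
import Mathlib

section
/- R(−k) ∈ ℤ for every integer k, and D_{a−b} · R′(−k) ∈ ℤ for every integer k. -/
/-- `Dlcm N` is the least common multiple of `1, 2, …, N` (with `Dlcm 0 = 1`). -/
def Dlcm (N : ℕ) : ℕ := (Finset.Icc 1 N).lcm id

/-- `Rup a b t = (t+b)(t+b+1)⋯(t+a-1)/(a-b)!` (for `a ≥ b`). -/
noncomputable def Rup (a b : ℤ) (t : ℝ) : ℝ :=
  (∏ i ∈ Finset.range (a - b).toNat, (t + (b : ℝ) + (i : ℝ))) / ((a - b).toNat.factorial : ℝ)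

lemma asc_eq_fact_mul (c : ℤ) (j : ℕ) :
    (ascPochhammer ℤ j).eval c = (j.factorial : ℤ) * Ring.multichoose c j := by
  rw [← Polynomial.ascPochhammer_smeval_eq_eval,
    ← Ring.factorial_nsmul_multichoose_eq_ascPochhammer]
  simp [nsmul_eq_mul]

lemma erase_prod_sum (m : ℕ) :
    (∑ i ∈ Finset.range m, ∏ j ∈ (Finset.range m).erase i, (j : ℝ))
      = if m = 0 then 0 else ((m - 1).factorial : ℝ) := by
  cases m with
  | zero => simp
  | succ m =>
    rw [if_neg (Nat.succ_ne_zero m)]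
    rw [Finset.sum_eq_single 0]
    · have h1 : (Finset.range (m+1)).erase 0 = Finset.Ico 1 (m+1) := by
        ext x; simp [Finset.mem_erase, Finset.mem_Ico, Nat.lt_succ_iff]; omega
      rw [h1, ← Nat.cast_prod, Finset.prod_Ico_id_eq_factorial]
      simp
    · intro i hi hi0
      apply Finset.prod_eq_zero (i := 0)
      · simp [Finset.mem_erase, Ne.symm hi0]
      · simp
    · intro h; simp at h

lemma key_identity (c : ℤ) (n : ℕ) (s : ℝ) :
    ∏ i ∈ Finset.range n, (s + (c : ℝ) + (i : ℝ)) =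
      ∑ m ∈ Finset.range (n + 1), (n.choose m : ℝ) *
        ((Polynomial.eval c (ascPochhammer ℤ (n - m)) : ℤ) : ℝ) *
        ∏ i ∈ Finset.range m, (s + (i : ℝ)) := by
  set A : ℕ → ℝ := fun j => ((Polynomial.eval c (ascPochhammer ℤ j) : ℤ) : ℝ) with hA
  set p : ℕ → ℝ := fun m => ∏ i ∈ Finset.range m, (s + (i : ℝ)) with hp
  have hAs : ∀ j : ℕ, A (j + 1) = A j * ((c : ℝ) + j) := by
    intro j
    simp only [hA, ascPochhammer_succ_eval]
    push_cast
    ring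
  have hps : ∀ m : ℕ, p (m + 1) = p m * (s + m) := by
    intro m; simp [hp, Finset.prod_range_succ]
  induction n with
  | zero => simp [hA, hp]
  | succ n ih =>
    rw [Finset.prod_range_succ, ih, Finset.sum_mul]
    have hsplit : ∀ m ∈ Finset.range (n + 1),
        (n.choose m : ℝ) * A (n - m) * p m * (s + (c : ℝ) + n)
          = (n.choose m : ℝ) * A (n - m) * p (m + 1)
            + (n.choose m : ℝ) * A (n - m + 1) * p m := by
      intro m hm
      rw [Finset.mem_range, Nat.lt_succ_iff] at hm
      have h1 : (s + (c : ℝ) + n) = (s + m) + ((c : ℝ) + ((n - m : ℕ) : ℝ)) := by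
        rw [Nat.cast_sub hm]; ring
      rw [hps, hAs, h1]; ring
    rw [Finset.sum_congr rfl hsplit, Finset.sum_add_distrib]
    rw [Finset.sum_range_succ' (fun m => ((n+1).choose m : ℝ) * A (n + 1 - m) * p m) (n + 1)]
    have h0 : ((n+1).choose 0 : ℝ) * A (n + 1 - 0) * p 0 = A (n + 1) := by
      simp [hp]
    rw [h0]
    have hshift : ∀ m ∈ Finset.range (n + 1),
        ((n+1).choose (m+1) : ℝ) * A (n + 1 - (m+1)) * p (m+1)
          = (n.choose m : ℝ) * A (n - m) * p (m+1)
            + (n.choose (m+1) : ℝ) * A (n - m) * p (m+1) := by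
      intro m hm
      have : n + 1 - (m + 1) = n - m := by omega
      rw [this, Nat.choose_succ_succ]
      push_cast
      ring
    rw [Finset.sum_congr rfl hshift, Finset.sum_add_distrib]
    have hlhs2 : ∑ m ∈ Finset.range (n + 1), (n.choose m : ℝ) * A (n - m + 1) * p m
        = (∑ m ∈ Finset.range n, (n.choose (m+1) : ℝ) * A (n - m) * p (m+1)) + A (n + 1) := by
      rw [Finset.sum_range_succ' (fun m => (n.choose m : ℝ) * A (n - m + 1) * p m) n]
      congr 1
      · apply Finset.sum_congr rfl
        intro m hm
        rw [Finset.mem_range] at hm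
        have : n - (m + 1) + 1 = n - m := by omega
        rw [this]
      · simp [hp]
    have hrhs2 : ∑ m ∈ Finset.range (n + 1), (n.choose (m+1) : ℝ) * A (n - m) * p (m+1)
        = ∑ m ∈ Finset.range n, (n.choose (m+1) : ℝ) * A (n - m) * p (m+1) := by
      rw [Finset.sum_range_succ]
      simp [Nat.choose_succ_self]
    rw [hlhs2, hrhs2]
    ring


/-- For integers `a ≥ b`: `R(-k) ∈ ℤ` and `D_{a-b}·R'(-k) ∈ ℤ` for every integer `k`. -/
theorem integral_valued_polynomial_values (a b : ℤ) (hab : b ≤ a) (k : ℤ) :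
    (∃ m : ℤ, Rup a b (-(k : ℝ)) = (m : ℝ)) ∧
      ∃ m : ℤ, (Dlcm (a - b).toNat : ℝ) * deriv (Rup a b) (-(k : ℝ)) = (m : ℝ) := by
  set n : ℕ := (a - b).toNat with hn
  set c : ℤ := b - k with hc
  set e : ℕ → ℤ := fun m => Ring.multichoose c (n - m) with he
  set G : ℝ → ℝ := fun t => ∑ m ∈ Finset.range (n + 1),
      ((e m : ℝ) / (m.factorial : ℝ)) * ∏ i ∈ Finset.range m, (t + (k : ℝ) + (i : ℝ)) with hG
  have hRG : Rup a b = G := by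
    funext t
    show (∏ i ∈ Finset.range n, (t + (b : ℝ) + (i : ℝ))) / (n.factorial : ℝ) = G t
    have hb : (b : ℝ) = (k : ℝ) + (c : ℝ) := by rw [hc]; push_cast; ring
    have hpr : ∀ i : ℕ, t + (b : ℝ) + (i : ℝ) = (t + (k : ℝ)) + (c : ℝ) + (i : ℝ) := by
      intro i; rw [hb]; ring
    rw [Finset.prod_congr rfl (fun i _ => hpr i), key_identity c n (t + (k : ℝ)),
      Finset.sum_div, hG]
    apply Finset.sum_congr rfl
    intro m hm
    rw [Finset.mem_range, Nat.lt_succ_iff] at hm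
    have hfact : (n.choose m : ℝ) * (m.factorial : ℝ) * ((n - m).factorial : ℝ)
        = (n.factorial : ℝ) := by
      exact_mod_cast congrArg (Nat.cast (R := ℝ)) (Nat.choose_mul_factorial_mul_factorial hm)
    have hA : ((Polynomial.eval c (ascPochhammer ℤ (n - m)) : ℤ) : ℝ)
        = ((n - m).factorial : ℝ) * (e m : ℝ) := by
      rw [asc_eq_fact_mul]; push_cast [he]; ring
    have hm0 : (m.factorial : ℝ) ≠ 0 := Nat.cast_ne_zero.mpr m.factorial_ne_zero
    have hn0 : (n.factorial : ℝ) ≠ 0 := Nat.cast_ne_zero.mpr n.factorial_ne_zero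
    have hprod : (t + (k : ℝ)) + 0 = t + (k : ℝ) := by ring
    have : ∏ i ∈ Finset.range m, ((t + (k : ℝ)) + (i : ℝ))
        = ∏ i ∈ Finset.range m, (t + (k : ℝ) + (i : ℝ)) := by
      apply Finset.prod_congr rfl; intro i _; ring
    have key2 : (n.choose m : ℝ) * (((n - m).factorial : ℝ) * (e m : ℝ)) / (n.factorial : ℝ)
        = (e m : ℝ) / (m.factorial : ℝ) := by
      rw [div_eq_div_iff hn0 hm0]
      linear_combination (e m : ℝ) * hfact
    rw [hA, this]
    calc (n.choose m : ℝ) * (((n - m).factorial : ℝ) * (e m : ℝ))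
          * (∏ i ∈ Finset.range m, (t + (k : ℝ) + (i : ℝ))) / (n.factorial : ℝ)
        = ((n.choose m : ℝ) * (((n - m).factorial : ℝ) * (e m : ℝ)) / (n.factorial : ℝ))
          * ∏ i ∈ Finset.range m, (t + (k : ℝ) + (i : ℝ)) := by ring
      _ = (e m : ℝ) / (m.factorial : ℝ) * ∏ i ∈ Finset.range m, (t + (k : ℝ) + (i : ℝ)) := by
          rw [key2]
  constructor
  · refine ⟨e 0, ?_⟩
    rw [hRG, hG]
    simp only []
    rw [Finset.sum_eq_single 0]
    · simp
    · intro m hm hm0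
      have : ∏ i ∈ Finset.range m, (-(k : ℝ) + (k : ℝ) + (i : ℝ)) = 0 := by
        apply Finset.prod_eq_zero (i := 0)
        · exact Finset.mem_range.mpr (Nat.pos_of_ne_zero hm0)
        · simp
      rw [this, mul_zero]
    · intro h; simp at h
  · -- derivative part
    have hprodD : ∀ m : ℕ, HasDerivAt (fun t : ℝ => ∏ i ∈ Finset.range m, (t + (k : ℝ) + (i : ℝ)))
        (if m = 0 then 0 else ((m - 1).factorial : ℝ)) (-(k : ℝ)) := by
      intro m
      have h := HasDerivAt.fun_finsetProd (u := Finset.range m)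
        (f := fun i t => t + (k : ℝ) + (i : ℝ)) (f' := fun _ => 1) (x := -(k : ℝ))
        (fun i _ => ((hasDerivAt_id _).add_const (k : ℝ)).add_const (i : ℝ))
      have hval : (∑ i ∈ Finset.range m,
          (∏ j ∈ (Finset.range m).erase i, (-(k : ℝ) + (k : ℝ) + (j : ℝ))) • (1 : ℝ))
          = if m = 0 then 0 else ((m - 1).factorial : ℝ) := by
        rw [← erase_prod_sum]
        apply Finset.sum_congr rfl
        intro i _
        rw [smul_eq_mul, mul_one]
        apply Finset.prod_congr rfl
        intro j _; ring
      rw [hval] at h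
      exact h
    have hD : HasDerivAt G (∑ m ∈ Finset.range (n + 1),
        ((e m : ℝ) / (m.factorial : ℝ)) * (if m = 0 then 0 else ((m - 1).factorial : ℝ)))
        (-(k : ℝ)) := by
      apply HasDerivAt.fun_sum
      intro m _
      exact (hprodD m).const_mul _
    refine ⟨∑ m ∈ Finset.range (n + 1), e m * ((Dlcm n / m : ℕ) : ℤ), ?_⟩
    rw [hRG, hD.deriv, Finset.mul_sum, Int.cast_sum]
    apply Finset.sum_congr rfl
    intro m hm
    rw [Finset.mem_range, Nat.lt_succ_iff] at hm
    cases m with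
    | zero => simp
    | succ mm =>
      rw [if_neg (Nat.succ_ne_zero mm), Int.cast_mul, Int.cast_natCast]
      have hdvd : (mm + 1) ∣ Dlcm n := by
        have hmem : (mm + 1) ∈ Finset.Icc 1 n := by
          rw [Finset.mem_Icc]; omega
        simpa [Dlcm] using Finset.dvd_lcm (f := id) hmem
      have hcast : ((Dlcm n / (mm + 1) : ℕ) : ℝ) = (Dlcm n : ℝ) / ((mm + 1 : ℕ) : ℝ) :=
        Nat.cast_div_charZero hdvd
      rw [hcast]
      have h1 : ((mm + 1).factorial : ℝ) = ((mm + 1 : ℕ) : ℝ) * (mm.factorial : ℝ) := by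
        rw [Nat.factorial_succ]; push_cast; ring
      have h2 : (mm.factorial : ℝ) ≠ 0 := Nat.cast_ne_zero.mpr mm.factorial_ne_zero
      have h3 : ((mm + 1 : ℕ) : ℝ) ≠ 0 := by positivity
      have h4 : ((mm + 1).factorial : ℝ) ≠ 0 := Nat.cast_ne_zero.mpr (mm+1).factorial_ne_zero
      have hsucc : (mm + 1) - 1 = mm := by omega
      rw [hsucc, h1]
      field_simp
end

section
/- Let n ≥ 0 and s be integers, let P be a polynomial with rational coefficients of degree at most n, and set Q(t) = P(t)/((t+s)(t+s+1)⋯(t+s+n)). Assume that for every k ∈ {s, s+1, …, s+n} the value of the function t ↦ Q(t)(t+k) at t = −k (with the removable singularity removed) is an integer. Then for every integer l ≥ 0 and every k ∈ {s, s+1, …, s+n}, (D_n^l / l!) · (d/dt)^l [Q(t)(t+k)] evaluated at t = −k is an integer. -/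
/-- For `k ∈ {s,…,s+n}`, `QmulK n s P k` is the function
`t ↦ Q(t)(t+k) = P(t)/∏_{i : s+i ≠ k}(t+s+i)` with the removable singularity at `t = -k`
removed, where `Q(t) = P(t)/((t+s)(t+s+1)⋯(t+s+n))`. -/
noncomputable def QmulK (n : ℕ) (s : ℤ) (P : Polynomial ℚ) (k : ℤ) (t : ℝ) : ℝ :=
  (P.map (algebraMap ℚ ℝ)).eval t /
    ∏ i ∈ (Finset.range (n + 1)).filter (fun i : ℕ => s + (i : ℤ) ≠ k),
      (t + (s : ℝ) + (i : ℝ))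

lemma prod_neg_one_sub (l : ℕ) :
    ∏ j ∈ Finset.range l, ((-1 : ℝ) - (j : ℝ)) = (-1) ^ l * (l.factorial : ℝ) := by
  induction l with
  | zero => simp
  | succ l ih =>
    rw [Finset.prod_range_succ, ih, Nat.factorial_succ]
    push_cast
    ring

lemma dvd_Dlcm {w : ℤ} {n : ℕ} (h1 : w ≠ 0) (h2 : w.natAbs ≤ n) : w ∣ (Dlcm n : ℤ) := by
  have : w.natAbs ∣ Dlcm n := by
    apply Finset.dvd_lcm (f := id)
    simp only [Finset.mem_Icc]
    exact ⟨Int.natAbs_pos.mpr h1, h2⟩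
  exact (Int.natAbs_dvd).mp (Int.natCast_dvd_natCast.mpr this)

lemma iteratedDeriv_const_add_sum_inv (F : Finset ℕ) (c a : ℕ → ℝ) (C : ℝ) (l : ℕ) :
    ∀ t : ℝ, (∀ i ∈ F, t + c i ≠ 0) →
    iteratedDeriv l (fun t => C + ∑ i ∈ F, a i * (t + c i) ^ (-1 : ℤ)) t
      = (if l = 0 then C else 0)
        + ∑ i ∈ F, a i * (∏ j ∈ Finset.range l, ((-1 : ℝ) - (j : ℝ))) * (t + c i) ^ (-1 - (l : ℤ)) := by
  have hUopen : IsOpen {t : ℝ | ∀ i ∈ F, t + c i ≠ 0} := by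
    have : {t : ℝ | ∀ i ∈ F, t + c i ≠ 0} = ⋂ i ∈ F, (fun t : ℝ => t + c i) ⁻¹' ({0}ᶜ) := by
      ext t; simp [Set.mem_iInter, sub_eq_zero, eq_neg_iff_add_eq_zero]
    rw [this]
    exact isOpen_biInter_finset fun i _ =>
      (isOpen_compl_singleton).preimage (continuous_id.add continuous_const)
  induction l with
  | zero =>
    intro t ht
    simp [iteratedDeriv_zero]
  | succ l ih =>
    intro t ht
    rw [iteratedDeriv_succ]
    have hev : iteratedDeriv l (fun t => C + ∑ i ∈ F, a i * (t + c i) ^ (-1 : ℤ))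
        =ᶠ[nhds t] (fun t => (if l = 0 then C else 0)
          + ∑ i ∈ F, a i * (∏ j ∈ Finset.range l, ((-1 : ℝ) - (j : ℝ))) * (t + c i) ^ (-1 - (l : ℤ))) :=
      Filter.eventuallyEq_of_mem (hUopen.mem_nhds ht) (fun x hx => ih x hx)
    rw [hev.deriv_eq]
    have hder : HasDerivAt (fun t : ℝ => (if l = 0 then C else 0)
          + ∑ i ∈ F, a i * (∏ j ∈ Finset.range l, ((-1 : ℝ) - (j : ℝ))) * (t + c i) ^ (-1 - (l : ℤ)))
        (∑ i ∈ F, a i * (∏ j ∈ Finset.range l, ((-1 : ℝ) - (j : ℝ))) *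
          ((Int.cast (-1 - (l : ℤ)) : ℝ) * (t + c i) ^ (-1 - (l : ℤ) - 1))) t := by
      refine HasDerivAt.const_add _ (HasDerivAt.fun_sum fun i hi => ?_)
      have h1 : HasDerivAt (fun y : ℝ => y ^ (-1 - (l : ℤ)))
          ((Int.cast (-1 - (l : ℤ)) : ℝ) * (t + c i) ^ (-1 - (l : ℤ) - 1)) (t + c i) :=
        hasDerivAt_zpow _ _ (Or.inl (ht i hi))
      exact (h1.comp_add_const t (c i)).const_mul _
    rw [hder.deriv]
    rw [if_neg (Nat.succ_ne_zero l)]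
    rw [zero_add]
    refine Finset.sum_congr rfl fun i hi => ?_
    rw [Finset.prod_range_succ]
    have hexp : (-1 - (l : ℤ) - 1) = -1 - ((l + 1 : ℕ) : ℤ) := by push_cast; ring
    rw [hexp]
    push_cast
    ring

/-- Nikishin–Rivoal arithmetic lemma: if `P` has rational coefficients, degree at most `n`,
and `Q(t)(t+k)|_{t=-k} ∈ ℤ` for all `k = s, …, s+n`, then
`(D_n^l/l!)·(Q(t)(t+k))^{(l)}|_{t=-k} ∈ ℤ` for all `l ≥ 0` and `k = s, …, s+n`. -/
theorem nikishin_rivoal_arithmetic_lemma (n : ℕ) (s : ℤ) (P : Polynomial ℚ)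
    (hdeg : P.natDegree ≤ n)
    (hint : ∀ k ∈ Finset.Icc s (s + (n : ℤ)), ∃ m : ℤ, QmulK n s P k (-(k : ℝ)) = (m : ℝ)) :
    ∀ l : ℕ, ∀ k ∈ Finset.Icc s (s + (n : ℤ)), ∃ m : ℤ,
      (Dlcm n : ℝ) ^ l / (l.factorial : ℝ) *
        iteratedDeriv l (QmulK n s P k) (-(k : ℝ)) = (m : ℝ) := by
  intro l k hk
  rw [Finset.mem_Icc] at hk
  obtain ⟨hk1, hk2⟩ := hk
  set Pm : Polynomial ℝ := P.map (algebraMap ℚ ℝ) with hPm_def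
  set c : ℕ → ℝ := fun i => (s : ℝ) + i with hc_def
  set v : ℕ → ℝ := fun i => -(c i) with hv_def
  set S : Finset ℕ := Finset.range (n + 1) with hS_def
  set F : Finset ℕ := S.filter (fun i : ℕ => s + (i : ℤ) ≠ k) with hF_def
  set i₀ : ℕ := (k - s).toNat with hi0_def
  have hi0k : (i₀ : ℤ) = k - s := Int.toNat_of_nonneg (by omega)
  have hi0S : i₀ ∈ S := by rw [hS_def, Finset.mem_range]; omega
  have hFe : F = S.erase i₀ := by
    rw [hF_def, ← Finset.filter_ne']
    exact Finset.filter_congr fun i _ => by constructor <;> intro h <;> omega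
  have hck : c i₀ = (k : ℝ) := by
    have h1 : ((i₀ : ℤ) : ℝ) = (k : ℝ) - (s : ℝ) := by rw [hi0k]; push_cast; ring
    simp only [hc_def]
    push_cast at h1 ⊢
    linarith
  have hkv : -(k : ℝ) = v i₀ := by simp only [hv_def, hck]
  have hinj : Set.InjOn v ↑S := by
    intro x _ y _ hxy
    simp only [hv_def, hc_def, neg_inj, add_right_inj] at hxy
    exact_mod_cast hxy
  have hdegS : Pm.degree < (S.card : WithBot ℕ) := by
    refine lt_of_le_of_lt Polynomial.degree_le_natDegree ?_
    have h1 : Pm.natDegree < S.card := by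
      rw [hS_def, Finset.card_range]
      exact Nat.lt_succ_of_le (le_trans Polynomial.natDegree_map_le hdeg)
    exact_mod_cast h1
  set B : ℕ → ℝ := fun i => Pm.eval (v i) * (∏ j ∈ S.erase i, (v i - v j))⁻¹ with hB_def
  have hBval : ∀ i ∈ S, B i = QmulK n s P (s + (i : ℤ)) (-(((s + (i : ℤ)) : ℤ) : ℝ)) := by
    intro i hiS
    simp only [QmulK]
    have hx : (-(((s + (i : ℤ)) : ℤ) : ℝ)) = v i := by
      simp only [hv_def, hc_def]; push_cast; ring
    have hfilter : (Finset.range (n + 1)).filter (fun j : ℕ => s + (j : ℤ) ≠ s + (i : ℤ))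
        = S.erase i := by
      rw [← hS_def, ← Finset.filter_ne']
      exact Finset.filter_congr fun j _ => by constructor <;> intro h <;> omega
    rw [hfilter, hx, div_eq_mul_inv]
    have hpe : ∏ j ∈ S.erase i, (v i + (s : ℝ) + (j : ℝ)) = ∏ j ∈ S.erase i, (v i - v j) :=
      Finset.prod_congr rfl fun j _ => by simp only [hv_def, hc_def]; ring
    rw [hpe]
  have hBint : ∀ i ∈ S, ∃ m : ℤ, B i = (m : ℝ) := by
    intro i hiS
    have hiN : i < n + 1 := Finset.mem_range.mp hiS
    obtain ⟨m, hm⟩ := hint (s + (i : ℤ)) (by rw [Finset.mem_Icc]; omega)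
    exact ⟨m, by rw [hBval i hiS]; exact hm⟩
  have claimA : ∀ t : ℝ, (∀ i ∈ F, t + c i ≠ 0) →
      QmulK n s P k t = (B i₀ + ∑ i ∈ F, B i)
        + ∑ i ∈ F, (B i * (c i₀ - c i)) * (t + c i) ^ (-1 : ℤ) := by
    intro t ht
    have htv : ∀ j ∈ F, t - v j ≠ 0 := by
      intro j hj
      simp only [hv_def, sub_neg_eq_add]
      exact ht j hj
    have hPP : (∏ j ∈ F, (t - v j)) ≠ 0 := Finset.prod_ne_zero_iff.mpr htv
    have hPmI : Pm = Lagrange.interpolate S v (fun i => Pm.eval (v i)) :=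
      Lagrange.eq_interpolate hinj hdegS
    have heval : Pm.eval t = ∑ i ∈ S, B i * ∏ j ∈ S.erase i, (t - v j) := by
      conv_lhs => rw [hPmI]
      rw [Lagrange.interpolate_apply, Polynomial.eval_finset_sum]
      refine Finset.sum_congr rfl fun i hi => ?_
      rw [Polynomial.eval_mul, Polynomial.eval_C, Lagrange.basis, Polynomial.eval_prod]
      simp only [Lagrange.basisDivisor, Polynomial.eval_mul, Polynomial.eval_C,
        Polynomial.eval_sub, Polynomial.eval_X]
      rw [Finset.prod_mul_distrib, Finset.prod_inv_distrib, hB_def]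
      ring
    have hden : ∏ i ∈ (Finset.range (n + 1)).filter (fun i : ℕ => s + (i : ℤ) ≠ k),
        (t + (s : ℝ) + (i : ℝ)) = ∏ j ∈ F, (t - v j) := by
      rw [← hS_def, ← hF_def]
      refine Finset.prod_congr rfl fun j _ => ?_
      simp only [hv_def, hc_def]
      ring
    simp only [QmulK]
    rw [hden, heval, ← Finset.add_sum_erase S _ hi0S, ← hFe]
    rw [add_div, add_assoc, ← Finset.sum_add_distrib]
    congr 1
    · exact mul_div_cancel_right₀ _ hPP
    · rw [Finset.sum_div]
      refine Finset.sum_congr rfl fun i hi => ?_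
      have hine : i ≠ i₀ := (Finset.mem_erase.mp (hFe ▸ hi)).1
      have hiS : i ∈ S := (Finset.mem_erase.mp (hFe ▸ hi)).2
      have hi0mem : i₀ ∈ S.erase i := Finset.mem_erase.mpr ⟨fun h => hine h.symm, hi0S⟩
      rw [← Finset.mul_prod_erase (S.erase i) _ hi0mem, Finset.erase_right_comm, ← hFe]
      have hprod : ∏ j ∈ F.erase i, (t - v j) = (∏ j ∈ F, (t - v j)) * (t - v i)⁻¹ :=
        (eq_mul_inv_iff_mul_eq₀ (htv i hi)).mpr (Finset.prod_erase_mul F _ hi)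
      rw [hprod]
      have h1 : t - v i ≠ 0 := htv i hi
      have h2 : t - v i₀ = t + c i₀ := by simp only [hv_def, sub_neg_eq_add]
      have h3 : t - v i = t + c i := by simp only [hv_def, sub_neg_eq_add]
      rw [zpow_neg_one, h2, h3]
      have halg : ∀ (b pp x y : ℝ), pp ≠ 0 → x ≠ 0 →
          b * (y * (pp * x⁻¹)) / pp = b + b * (y - x) * x⁻¹ := by
        intro b pp x y hpp hx
        field_simp
        ring
      have h4 : c i₀ - c i = (t + c i₀) - (t + c i) := by ring
      rw [h4]
      exact halg (B i) _ _ _ hPP (h3 ▸ h1)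
  set U : Set ℝ := {t | ∀ i ∈ F, t + c i ≠ 0} with hU_def
  have hkU : -(k : ℝ) ∈ U := by
    intro i hi
    have hik : s + (i : ℤ) ≠ k := (Finset.mem_filter.mp hi).2
    simp only [hc_def]
    intro h0
    apply hik
    have h1 : ((s + (i : ℤ) - k : ℤ) : ℝ) = 0 := by push_cast; linarith
    have h2 : s + (i : ℤ) - k = 0 := by exact_mod_cast h1
    omega
  rcases Nat.eq_zero_or_pos l with h0 | hl
  · subst h0
    obtain ⟨m, hm⟩ := hint k (Finset.mem_Icc.mpr ⟨hk1, hk2⟩)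
    exact ⟨m, by simpa [iteratedDeriv_zero] using hm⟩
  · have hUopen : IsOpen U := by
      have : U = ⋂ i ∈ F, (fun t : ℝ => t + c i) ⁻¹' ({0}ᶜ) := by
        ext t; simp [hU_def, Set.mem_iInter, sub_eq_zero, eq_neg_iff_add_eq_zero]
      rw [this]
      exact isOpen_biInter_finset fun i _ =>
        (isOpen_compl_singleton).preimage (continuous_id.add continuous_const)
    have hg : QmulK n s P k =ᶠ[nhds (-(k : ℝ))]
        (fun t => (B i₀ + ∑ i ∈ F, B i)
          + ∑ i ∈ F, (B i * (c i₀ - c i)) * (t + c i) ^ (-1 : ℤ)) :=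
      Filter.eventuallyEq_of_mem (hUopen.mem_nhds hkU) claimA
    rw [Filter.EventuallyEq.iteratedDeriv_eq l hg,
      iteratedDeriv_const_add_sum_inv F c (fun i => B i * (c i₀ - c i)) _ l _ hkU,
      if_neg (Nat.pos_iff_ne_zero.mp hl), zero_add, prod_neg_one_sub]
    have hBc : ∀ i, i ∈ F → ∃ m : ℤ, B i = (m : ℝ) := fun i hi =>
      hBint i (Finset.mem_of_mem_filter i hi)
    choose mB hmB using hBc
    have hdc : ∀ i, i ∈ F → ∃ d : ℤ, (Dlcm n : ℤ) = (s + (i : ℤ) - k) * d := by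
      intro i hi
      have h1 : s + (i : ℤ) ≠ k := (Finset.mem_filter.mp hi).2
      have h2 : i < n + 1 := Finset.mem_range.mp (Finset.mem_of_mem_filter i hi)
      obtain ⟨d, hd⟩ := dvd_Dlcm (w := s + (i : ℤ) - k) (n := n) (by omega) (by omega)
      exact ⟨d, hd⟩
    choose dB hdB using hdc
    refine ⟨∑ i ∈ F.attach, (-1) ^ (l + 1) * mB i.1 i.2 * (dB i.1 i.2) ^ l, ?_⟩
    rw [Finset.mul_sum,
      ← Finset.sum_attach F (fun i => (Dlcm n : ℝ) ^ l / (l.factorial : ℝ) *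
        (B i * (c i₀ - c i) * ((-1 : ℝ) ^ l * (l.factorial : ℝ)) * ((-(k : ℝ)) + c i) ^ (-1 - (l : ℤ))))]
    push_cast
    refine Finset.sum_congr rfl fun i _ => ?_
    have hik : s + ((i.1 : ℕ) : ℤ) ≠ k := (Finset.mem_filter.mp i.2).2
    have hw0 : (s + ((i.1 : ℕ) : ℤ) - k) ≠ 0 := by omega
    have hwR : (-(k : ℝ)) + c i.1 = ((s + ((i.1 : ℕ) : ℤ) - k : ℤ) : ℝ) := by
      simp only [hc_def]; push_cast; ring
    have hkc : c i₀ - c i.1 = -((s + ((i.1 : ℕ) : ℤ) - k : ℤ) : ℝ) := by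
      rw [hck]; simp only [hc_def]; push_cast; ring
    have hD : (Dlcm n : ℝ) = ((s + ((i.1 : ℕ) : ℤ) - k : ℤ) : ℝ) * (dB i.1 i.2 : ℝ) := by
      exact_mod_cast congrArg (Int.cast : ℤ → ℝ) (hdB i.1 i.2)
    rw [hmB i.1 i.2, hwR, hkc]
    have hzp : (((s + ((i.1 : ℕ) : ℤ) - k : ℤ) : ℝ)) ^ (-1 - (l : ℤ))
        = ((((s + ((i.1 : ℕ) : ℤ) - k : ℤ) : ℝ)) ^ (l + 1))⁻¹ := by
      rw [show (-1 - (l : ℤ)) = -((l + 1 : ℕ) : ℤ) by push_cast; ring, zpow_neg, zpow_natCast]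
    rw [hzp]
    have hwR0 : (((s + ((i.1 : ℕ) : ℤ) - k : ℤ) : ℝ)) ≠ 0 := Int.cast_ne_zero.mpr hw0
    have hfac : (l.factorial : ℝ) ≠ 0 := Nat.cast_ne_zero.mpr l.factorial_ne_zero
    generalize hW : (((s + ((i.1 : ℕ) : ℤ) - k : ℤ) : ℝ)) = W at hD hwR0 ⊢
    rw [hD, mul_pow, pow_succ]
    field_simp
    ring
end

section
/- For j = 3,4 and every integer k, the value of the function t ↦ R_j(t)(t+k) at t = −k (with the removable singularity removed) is an integer; moreover, for every integer k with a₃* ≤ k ≤ b₄*−1, D_{b₄*−min{a_j,a₃*}−1} · (d/dt)[R_j(t)(t+k)] evaluated at t = −k is an integer. -/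
/-- `RdownK a b k` is the function `t ↦ R(t)(t+k)` with the removable singularity at
`t = -k` removed, where `R(t) = (b-a-1)!/((t+a)(t+a+1)⋯(t+b-1))`. -/
noncomputable def RdownK (a b k : ℤ) (t : ℝ) : ℝ :=
  ((b - a - 1).toNat.factorial : ℝ) * (if a ≤ k ∧ k < b then 1 else t + (k : ℝ)) /
    ∏ i ∈ (Finset.range (b - a).toNat).filter (fun i : ℕ => a + (i : ℤ) ≠ k),
      (t + (a : ℝ) + (i : ℝ))


open Finset

lemma T_id (r : ℕ) : ∀ s : ℕ, ∑ i ∈ range (r+1), (-1:ℝ)^i * (r.choose i) / ((s:ℝ)+1+i)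
    = ((r.factorial : ℝ) * (s.factorial : ℝ)) / ((s+1+r).factorial : ℝ) := by
  induction r with
  | zero =>
    intro s
    have hne : ((s:ℝ)+1) ≠ 0 := by positivity
    simp [Nat.factorial_succ]
    field_simp
  | succ r ih =>
    intro s
    have fpos : ∀ m : ℕ, (0:ℝ) < (m.factorial : ℝ) := fun m => by
      exact_mod_cast m.factorial_pos
    have key : ∑ i ∈ range (r+1+1), (-1:ℝ)^i * ((r+1).choose i) / ((s:ℝ)+1+i)
        = (∑ i ∈ range (r+1), (-1:ℝ)^i * (r.choose i) / ((s:ℝ)+1+i))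
          - ∑ i ∈ range (r+1), (-1:ℝ)^i * (r.choose i) / (((s+1:ℕ):ℝ)+1+i) := by
      rw [Finset.sum_range_succ' (fun i => (-1:ℝ)^i * ((r+1).choose i) / ((s:ℝ)+1+i)) (r+1),
          Finset.sum_range_succ' (fun i => (-1:ℝ)^i * (r.choose i) / ((s:ℝ)+1+i)) r]
      have hterm : ∀ i ∈ range (r+1),
          (-1:ℝ)^(i+1) * ((r+1).choose (i+1)) / ((s:ℝ)+1+(i+1:ℕ))
          = -((-1:ℝ)^i * (r.choose i) / (((s+1:ℕ):ℝ)+1+i))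
            + -((-1:ℝ)^i * (r.choose (i+1)) / (((s+1:ℕ):ℝ)+1+i)) := by
        intro i _
        have hp : (((r+1).choose (i+1) : ℕ) : ℝ) = (r.choose i : ℝ) + (r.choose (i+1) : ℝ) := by
          rw [Nat.choose_succ_succ]; push_cast; ring
        have hne : ((s:ℝ)+1+(i+1:ℕ)) ≠ 0 := by push_cast; positivity
        rw [hp]
        push_cast
        field_simp
        ring
      rw [Finset.sum_congr rfl hterm, Finset.sum_add_distrib, Finset.sum_neg_distrib,
          Finset.sum_neg_distrib]
      have hlast : ∑ i ∈ range (r+1), (-1:ℝ)^i * (r.choose (i+1)) / (((s+1:ℕ):ℝ)+1+i)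
          = ∑ i ∈ range r, (-1:ℝ)^i * (r.choose (i+1)) / (((s+1:ℕ):ℝ)+1+i) := by
        rw [Finset.sum_range_succ]
        simp [Nat.choose_succ_self]
      have hshift : ∑ i ∈ range r, (-1:ℝ)^(i+1) * (r.choose (i+1)) / ((s:ℝ)+1+(i+1:ℕ))
          = -∑ i ∈ range r, (-1:ℝ)^i * (r.choose (i+1)) / (((s+1:ℕ):ℝ)+1+i) := by
        rw [← Finset.sum_neg_distrib]
        refine Finset.sum_congr rfl fun i _ => ?_
        push_cast; ring
      rw [hlast, hshift]
      push_cast [Nat.choose_zero_right]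
      ring
    rw [key, ih s, ih (s+1)]
    have h1 : ((s+1+(r+1)).factorial : ℝ) = ((s:ℝ)+2+r) * ((s+1+r).factorial : ℝ) := by
      have : s+1+(r+1) = (s+1+r)+1 := by omega
      rw [this, Nat.factorial_succ]; push_cast; ring
    have h2 : (((s+1)+1+r).factorial : ℝ) = ((s:ℝ)+2+r) * ((s+1+r).factorial : ℝ) := by
      have : (s+1)+1+r = (s+1+r)+1 := by omega
      rw [this, Nat.factorial_succ]; push_cast; ring
    have h3 : ((s+1).factorial : ℝ) = ((s:ℝ)+1) * (s.factorial : ℝ) := by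
      rw [Nat.factorial_succ]; push_cast; ring
    have h4 : ((r+1).factorial : ℝ) = ((r:ℝ)+1) * (r.factorial : ℝ) := by
      rw [Nat.factorial_succ]; push_cast; ring
    have hne : ((s+1+r).factorial : ℝ) ≠ 0 := by
      exact_mod_cast (Nat.factorial_pos _).ne'
    have hne2 : ((s:ℝ)+2+r) ≠ 0 := by positivity
    rw [h1, h2, h3, h4]
    field_simp
    ring

lemma dvd_Dlcm_s6 {c : ℤ} {N : ℕ} (h1 : c ≠ 0) (h2 : c.natAbs ≤ N) : c ∣ (Dlcm N : ℤ) := by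
  have h3 : c.natAbs ∈ Finset.Icc 1 N := by
    simp only [Finset.mem_Icc]
    exact ⟨Nat.one_le_iff_ne_zero.mpr (Int.natAbs_ne_zero.mpr h1), h2⟩
  have := Finset.dvd_lcm (f := id) h3
  have h4 : (c.natAbs : ℤ) ∣ (Dlcm N : ℤ) := Int.natCast_dvd_natCast.mpr this
  exact (Int.natAbs_dvd).mp h4

lemma prod_range_sub_cast (j : ℕ) : ∏ i ∈ range j, ((i:ℤ) - j) = (-1)^j * j.factorial := by
  have h1 : ∀ i ∈ range j, ((i:ℤ) - j) = (-1) * ((j - i : ℕ) : ℤ) := by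
    intro i hi
    have hij : i ≤ j := le_of_lt (mem_range.mp hi)
    push_cast [hij]
    ring
  rw [Finset.prod_congr rfl h1, Finset.prod_mul_distrib, Finset.prod_const]
  have h2 : ∏ i ∈ range j, ((j - i : ℕ) : ℤ) = ((∏ i ∈ range j, (j - i) : ℕ) : ℤ) := by
    push_cast; ring
  rw [h2]
  have h3 : ∏ i ∈ range j, (j - i) = j.factorial := by
    rw [← Finset.prod_range_add_one_eq_factorial j, ← Finset.prod_range_reflect (fun i => i + 1) j]
    exact Finset.prod_congr rfl fun i hi => by
      have := mem_range.mp hi; omega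
  rw [h3, Finset.card_range]

lemma prod_erase_sub_cast (n j : ℕ) (hj : j < n) :
    ∏ i ∈ (range n).erase j, ((i:ℤ) - j) = (-1)^j * j.factorial * (n-1-j).factorial := by
  induction n, Nat.succ_le_of_lt hj using Nat.le_induction with
  | base =>
    rw [Finset.range_add_one, Finset.erase_insert (by simp), prod_range_sub_cast]
    simp
  | succ n hn ih =>
    rw [Finset.range_add_one, Finset.erase_insert_of_ne (by omega : n ≠ j), Finset.prod_insert
      (by simp)]
    rw [ih (by omega)]
    have e1 : ((n:ℤ) - j) = ((n - j : ℕ) : ℤ) := by push_cast [Nat.le_of_succ_le hn]; ring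
    have e2 : (n + 1 - 1 - j).factorial = (n - j) * (n - 1 - j).factorial := by
      have : n + 1 - 1 - j = (n - 1 - j) + 1 := by omega
      rw [this, Nat.factorial_succ]
      congr 1
      omega
    rw [e1, e2]
    push_cast
    ring

lemma asc_prod (s : ℕ) : ∀ n : ℕ, ∏ i ∈ range n, (s+i) = s.ascFactorial n
  | 0 => by simp
  | n + 1 => by
    rw [Finset.prod_range_succ, asc_prod s n, Nat.ascFactorial_succ, mul_comm]

lemma hasDeriv_P (S : Finset ℕ) (c : ℕ → ℝ) (x : ℝ) :
    HasDerivAt (fun t => ∏ i ∈ S, (t + c i)) (∑ j ∈ S, ∏ i ∈ S.erase j, (x + c i)) x := by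
  have h := HasDerivAt.fun_finsetProd (u := S) (f := fun i t => t + c i) (f' := fun _ => 1)
    (x := x) (fun i _ => (hasDerivAt_id x).add_const (c i))
  simpa using h

lemma derA_main (D r s : ℕ) (hs : 0 < s) (hdvd : ∀ i, i < r+1 → ((s+i : ℕ):ℤ) ∣ (D:ℤ)) :
    ∃ m : ℤ, (D:ℝ) * ((r.factorial : ℝ) / ((s.ascFactorial (r+1) : ℕ) : ℝ)) = m := by
  refine ⟨∑ i ∈ range (r+1), (-1)^i * ((r.choose i) : ℤ) * ((D:ℤ) / ((s:ℤ)+i)), ?_⟩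
  have hfac : ∀ m : ℕ, ((m.factorial : ℕ):ℝ) ≠ 0 := fun m => by
    exact_mod_cast (Nat.factorial_pos m).ne'
  have h1 : ((s-1).factorial : ℝ) * ((s.ascFactorial (r+1) : ℕ) : ℝ) = ((s+r).factorial : ℝ) := by
    have h := Nat.factorial_mul_ascFactorial' s (r+1) hs
    have h' : s + (r+1) - 1 = s + r := by omega
    rw [h'] at h
    exact_mod_cast congrArg (Nat.cast : ℕ → ℝ) h
  have hasc : ((s.ascFactorial (r+1) : ℕ) : ℝ) ≠ 0 := by
    intro h0
    rw [h0, mul_zero] at h1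
    exact (hfac (s+r)) h1.symm
  have h2 := T_id r (s-1)
  have hse : (s-1)+1+r = s+r := by omega
  rw [hse] at h2
  have hc : ∀ i : ℕ, (((s-1:ℕ)):ℝ) + 1 + (i:ℝ) = ((s:ℝ)+i) := by
    intro i
    have : (((s-1:ℕ)):ℝ) = (s:ℝ) - 1 := by
      push_cast [hs]; ring
    rw [this]; ring
  simp only [hc] at h2
  have h3 : (r.factorial:ℝ) / ((s.ascFactorial (r+1):ℕ):ℝ)
      = ∑ i ∈ range (r+1), (-1:ℝ)^i * (r.choose i) / ((s:ℝ)+i) := by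
    rw [h2]
    rw [div_eq_div_iff hasc (hfac (s+r))]
    rw [← h1]; ring
  rw [h3, Finset.mul_sum]
  push_cast
  refine Finset.sum_congr rfl fun i hi => ?_
  have hd := hdvd i (mem_range.mp hi)
  have hd' : ((s:ℤ)+i) ∣ (D:ℤ) := by exact_mod_cast hd
  rw [Int.cast_div_charZero hd']
  push_cast
  ring

lemma filter_eq_erase (a b k : ℤ) (n j₀ : ℕ) (hn : (n:ℤ) = b - a) (hj₀ : (j₀:ℤ) = k - a) :
    (Finset.range n).filter (fun i : ℕ => a + (i:ℤ) ≠ k) = (Finset.range n).erase j₀ := by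
  ext i
  simp only [Finset.mem_filter, Finset.mem_erase, Finset.mem_range, ne_eq]
  constructor
  · rintro ⟨h1, h2⟩
    exact ⟨fun h => h2 (by omega), h1⟩
  · rintro ⟨h1, h2⟩
    exact ⟨h2, fun h => h1 (by omega)⟩

lemma val_int (a b k : ℤ) (hab : a < b) : ∃ m : ℤ, RdownK a b k (-(k:ℝ)) = m := by
  by_cases hcase : a ≤ k ∧ k < b
  · set n := (b - a).toNat with hn'
    have hn : (n:ℤ) = b - a := Int.toNat_of_nonneg (by omega)
    set j₀ := (k - a).toNat with hj₀'
    have hj₀ : (j₀:ℤ) = k - a := Int.toNat_of_nonneg (by omega)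
    have hj₀n : j₀ < n := by omega
    have hj₀le : j₀ ≤ n - 1 := by omega
    refine ⟨(-1)^j₀ * ((n-1).choose j₀ : ℤ), ?_⟩
    have hCn : (b - a - 1).toNat = n - 1 := by omega
    rw [RdownK, if_pos hcase, mul_one, filter_eq_erase a b k n j₀ hn hj₀, hCn]
    have hprod : ∏ i ∈ (Finset.range n).erase j₀, ((-(k:ℝ)) + (a:ℝ) + (i:ℝ))
        = (((-1:ℤ)^j₀ * j₀.factorial * (n-1-j₀).factorial : ℤ) : ℝ) := by
      rw [← prod_erase_sub_cast n j₀ hj₀n]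
      push_cast
      refine Finset.prod_congr rfl fun i _ => ?_
      have hj : ((j₀:ℝ)) = (k:ℝ) - (a:ℝ) := by exact_mod_cast hj₀
      rw [hj]; ring
    rw [hprod]
    have hCC : ((n-1).choose j₀) * j₀.factorial * ((n-1) - j₀).factorial = (n-1).factorial :=
      Nat.choose_mul_factorial_mul_factorial hj₀le
    have hsq : ((-1:ℝ)^j₀) * ((-1:ℝ)^j₀) = 1 := by
      rw [← pow_add, ← two_mul, pow_mul]; norm_num
    have hne : (((-1:ℤ)^j₀ * j₀.factorial * (n-1-j₀).factorial : ℤ) : ℝ) ≠ 0 := by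
      push_cast
      refine mul_ne_zero (mul_ne_zero (pow_ne_zero _ (by norm_num)) ?_) ?_ <;>
        exact_mod_cast (Nat.factorial_pos _).ne'
    rw [div_eq_iff hne]
    rw [← hCC]
    push_cast
    linear_combination (-((n-1).choose j₀ : ℝ) * (j₀.factorial : ℝ) * ((n-1-j₀).factorial : ℝ)) * hsq
  · exact ⟨0, by simp [RdownK, hcase]⟩

lemma der_int (a b k : ℤ) (hab : a < b) (N : ℕ) (hN1 : k - a ≤ (N:ℤ)) (hN2 : b - 1 - k ≤ (N:ℤ)) :
    ∃ m : ℤ, ((Dlcm N : ℕ) : ℝ) * deriv (RdownK a b k) (-(k:ℝ)) = m := by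
  set D := Dlcm N with hD
  set n := (b - a).toNat with hn'
  have hn : (n:ℤ) = b - a := Int.toNat_of_nonneg (by omega)
  have hn1 : 1 ≤ n := by omega
  have hCn : (b - a - 1).toNat = n - 1 := by omega
  set S := (Finset.range n).filter (fun i : ℕ => a + (i:ℤ) ≠ k) with hSdef
  set Q : ℤ := ∏ i ∈ S, (a + (i:ℤ) - k) with hQdef
  set R : ℤ := ∑ j ∈ S, ∏ i ∈ S.erase j, (a + (i:ℤ) - k) with hRdef
  have hQ0 : Q ≠ 0 := by
    rw [hQdef]
    refine Finset.prod_ne_zero_iff.mpr fun i hi => ?_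
    have h2 := (Finset.mem_filter.mp hi).2
    omega
  have hQne : (Q:ℝ) ≠ 0 := by exact_mod_cast hQ0
  have hfun : RdownK a b k = fun t => (((n-1).factorial : ℕ):ℝ) *
      (if a ≤ k ∧ k < b then 1 else t + (k:ℝ)) / ∏ i ∈ S, (t + ((a:ℝ) + (i:ℝ))) := by
    funext t
    simp only [RdownK, hCn, ← hn', ← hSdef, add_assoc]
  have hPder : HasDerivAt (fun t => ∏ i ∈ S, (t + ((a:ℝ)+(i:ℝ)))) ((R:ℝ)) (-(k:ℝ)) := by
    have h := hasDeriv_P S (fun i => (a:ℝ) + (i:ℝ)) (-(k:ℝ))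
    convert h using 1
    rw [hRdef]
    push_cast
    exact Finset.sum_congr rfl fun j _ => Finset.prod_congr rfl fun i _ => by ring
  have hPval : ∏ i ∈ S, ((-(k:ℝ)) + ((a:ℝ)+(i:ℝ))) = (Q:ℝ) := by
    rw [hQdef]; push_cast
    exact Finset.prod_congr rfl fun i _ => by ring
  have hPne : (fun t => ∏ i ∈ S, (t + ((a:ℝ)+(i:ℝ)))) (-(k:ℝ)) ≠ 0 := by
    show ∏ i ∈ S, ((-(k:ℝ)) + ((a:ℝ)+(i:ℝ))) ≠ 0
    rw [hPval]; exact hQne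
  by_cases hcase : a ≤ k ∧ k < b
  · -- harmonic case
    set j₀ := (k - a).toNat with hj₀'
    have hj₀ : (j₀:ℤ) = k - a := Int.toNat_of_nonneg (by omega)
    have hj₀n : j₀ < n := by omega
    have hSer : S = (Finset.range n).erase j₀ := filter_eq_erase a b k n j₀ hn hj₀
    have hfun2 : RdownK a b k = fun t => (((n-1).factorial : ℕ):ℝ) /
        ∏ i ∈ S, (t + ((a:ℝ) + (i:ℝ))) := by
      rw [hfun]
      funext t
      rw [if_pos hcase, mul_one]
    have h := (hasDerivAt_const (-(k:ℝ)) (((n-1).factorial : ℕ):ℝ)).div hPder hPne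
    rw [hPval] at h
    have hderiv : deriv (RdownK a b k) (-(k:ℝ))
        = (0 * (Q:ℝ) - (((n-1).factorial : ℕ):ℝ) * (R:ℝ)) / (Q:ℝ)^2 := by
      rw [hfun2]
      exact h.deriv
    have hCC : ((n-1).choose j₀ : ℤ) * (j₀.factorial:ℤ) * ((n-1-j₀).factorial:ℤ)
        = ((n-1).factorial : ℤ) := by
      exact_mod_cast Nat.choose_mul_factorial_mul_factorial (show j₀ ≤ n-1 by omega)
    have hQval : Q = (-1)^j₀ * (j₀.factorial : ℤ) * ((n-1-j₀).factorial : ℤ) := by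
      rw [hQdef, hSer, ← prod_erase_sub_cast n j₀ hj₀n]
      exact Finset.prod_congr rfl fun i _ => by omega
    have hdvd : ∀ j ∈ S, (a + (j:ℤ) - k) ∣ ((D:ℕ):ℤ) := by
      intro j hj
      rw [hSer, Finset.mem_erase] at hj
      obtain ⟨hj1, hj2⟩ := hj
      have hj3 := Finset.mem_range.mp hj2
      apply dvd_Dlcm_s6 (by omega)
      omega
    set T : ℤ := ∑ j ∈ S, (((D:ℕ):ℤ) / (a + (j:ℤ) - k)) with hT
    have hDR : ((D:ℕ):ℤ) * R = T * Q := by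
      rw [hRdef, hT, Finset.mul_sum, Finset.sum_mul]
      refine Finset.sum_congr rfl fun j hj => ?_
      have hd := hdvd j hj
      have hQj : (a + (j:ℤ) - k) * ∏ i ∈ S.erase j, (a + (i:ℤ) - k) = Q := by
        rw [hQdef]
        exact Finset.mul_prod_erase S (fun i => a + (i:ℤ) - k) hj
      calc ((D:ℕ):ℤ) * ∏ i ∈ S.erase j, (a + (i:ℤ) - k)
          = (((D:ℕ):ℤ) / (a+(j:ℤ)-k)) * ((a+(j:ℤ)-k) * ∏ i ∈ S.erase j, (a+(i:ℤ)-k)) := by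
            rw [← mul_assoc, Int.ediv_mul_cancel hd]
        _ = _ := by rw [hQj]
    refine ⟨-((-1)^j₀ * ((n-1).choose j₀ : ℤ) * T), ?_⟩
    have hsq : ((-1:ℤ)^j₀) * ((-1:ℤ)^j₀) = 1 := by
      rw [← pow_add, ← two_mul, pow_mul]; norm_num
    have key : ((D:ℕ):ℤ) * (0 * Q - ((n-1).factorial:ℤ) * R)
        = -((-1)^j₀ * ((n-1).choose j₀:ℤ) * T) * Q^2 := by
      have e1 : ((D:ℕ):ℤ) * (0 * Q - ((n-1).factorial:ℤ) * R)
          = -(((n-1).factorial:ℤ)) * (((D:ℕ):ℤ) * R) := by ring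
      rw [e1, hDR, ← hCC, hQval]
      linear_combination ((((n-1).choose j₀:ℤ)) * T * ((j₀.factorial:ℤ) * ((n-1-j₀).factorial:ℤ))^2 * ((-1:ℤ)^j₀)) * hsq
    rw [hderiv, mul_div_assoc', div_eq_iff (pow_ne_zero 2 hQne)]
    exact_mod_cast key
  · -- zero-value case
    have hk : k < a ∨ b ≤ k := by
      rcases not_and_or.mp hcase with h | h
      · left; omega
      · right; omega
    have hSfull : S = Finset.range n := by
      rw [hSdef]
      refine Finset.filter_true_of_mem fun i hi => ?_
      have := Finset.mem_range.mp hi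
      rcases hk with h | h <;> omega
    have hfun2 : RdownK a b k = fun t => (((n-1).factorial : ℕ):ℝ) * (t + (k:ℝ)) /
        ∏ i ∈ S, (t + ((a:ℝ) + (i:ℝ))) := by
      rw [hfun]
      funext t
      rw [if_neg hcase]
    have hnum : HasDerivAt (fun t : ℝ => (((n-1).factorial : ℕ):ℝ) * (t + (k:ℝ)))
        ((((n-1).factorial : ℕ):ℝ) * 1) (-(k:ℝ)) :=
      ((hasDerivAt_id _).add_const _).const_mul _
    have h := hnum.div hPder hPne
    rw [hPval] at h
    have hderiv : deriv (RdownK a b k) (-(k:ℝ))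
        = ((((n-1).factorial : ℕ):ℝ) * 1 * (Q:ℝ)
            - (((n-1).factorial : ℕ):ℝ) * ((-(k:ℝ)) + (k:ℝ)) * (R:ℝ)) / (Q:ℝ)^2 := by
      rw [hfun2]
      exact h.deriv
    have hsimp : ((((n-1).factorial : ℕ):ℝ) * 1 * (Q:ℝ)
            - (((n-1).factorial : ℕ):ℝ) * ((-(k:ℝ)) + (k:ℝ)) * (R:ℝ)) / (Q:ℝ)^2
        = (((n-1).factorial : ℕ):ℝ) / (Q:ℝ) := by
      have e1 : (((n-1).factorial : ℕ):ℝ) * 1 * (Q:ℝ)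
          - (((n-1).factorial : ℕ):ℝ) * ((-(k:ℝ)) + (k:ℝ)) * (R:ℝ)
          = (((n-1).factorial : ℕ):ℝ) * (Q:ℝ) := by ring
      rw [e1, sq]
      rw [mul_div_mul_right _ _ hQne]
    rw [hderiv, hsimp]
    rcases hk with hka | hkb
    · set s := (a - k).toNat with hs'
      have hs : (s:ℤ) = a - k := Int.toNat_of_nonneg (by omega)
      have hspos : 0 < s := by omega
      have hQasc : Q = ((s.ascFactorial n : ℕ) : ℤ) := by
        rw [hQdef, hSfull, ← asc_prod]
        push_cast
        exact Finset.prod_congr rfl fun i _ => by omega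
      have hdvd : ∀ i, i < (n-1)+1 → ((s+i : ℕ):ℤ) ∣ ((D:ℕ):ℤ) := by
        intro i hi
        apply dvd_Dlcm_s6 (by omega)
        omega
      obtain ⟨m, hm⟩ := derA_main D (n-1) s hspos hdvd
      have hnn : (n-1)+1 = n := by omega
      rw [hnn] at hm
      refine ⟨m, ?_⟩
      rw [hQasc]
      push_cast
      push_cast at hm
      exact hm
    · set u := (k - b + 1).toNat with hu'
      have hu : (u:ℤ) = k - b + 1 := Int.toNat_of_nonneg (by omega)
      have hupos : 0 < u := by omega
      have hQasc : Q = (-1)^n * ((u.ascFactorial n : ℕ) : ℤ) := by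
        rw [hQdef, hSfull]
        calc ∏ i ∈ Finset.range n, (a + (i:ℤ) - k)
            = ∏ i ∈ Finset.range n, ((-1) * ((u:ℤ) + ((n-1-i : ℕ):ℤ))) :=
              Finset.prod_congr rfl fun i hi => by
                have := Finset.mem_range.mp hi; omega
          _ = (-1)^n * ∏ i ∈ Finset.range n, ((u:ℤ) + ((n-1-i : ℕ):ℤ)) := by
              rw [Finset.prod_mul_distrib, Finset.prod_const, Finset.card_range]
          _ = (-1)^n * ∏ i ∈ Finset.range n, ((u:ℤ) + (i:ℤ)) := by
              congr 1
              exact Finset.prod_range_reflect (fun i => (u:ℤ) + (i:ℤ)) n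
          _ = (-1)^n * ((u.ascFactorial n : ℕ) : ℤ) := by
              rw [← asc_prod]; push_cast; ring
      have hdvd : ∀ i, i < (n-1)+1 → ((u+i : ℕ):ℤ) ∣ ((D:ℕ):ℤ) := by
        intro i hi
        apply dvd_Dlcm_s6 (by omega)
        omega
      obtain ⟨m, hm⟩ := derA_main D (n-1) u hupos hdvd
      have hnn : (n-1)+1 = n := by omega
      rw [hnn] at hm
      refine ⟨(-1)^n * m, ?_⟩
      rw [hQasc]
      have hascne : ((u.ascFactorial n : ℕ) : ℝ) ≠ 0 := by
        have h0 : ((u.ascFactorial n : ℕ) : ℤ) ≠ 0 := by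
          intro hh
          apply hQ0
          rw [hQasc, hh, mul_zero]
        exact_mod_cast h0
      have hsqr : ((-1:ℝ)^n) * ((-1:ℝ)^n) = 1 := by
        rw [← pow_add, ← two_mul, pow_mul]; norm_num
      push_cast
      push_cast at hm
      have hre : (((n-1).factorial : ℕ):ℝ) / ((-1:ℝ)^n * ((u.ascFactorial n : ℕ):ℝ))
          = (-1:ℝ)^n * ((((n-1).factorial : ℕ):ℝ) / ((u.ascFactorial n : ℕ):ℝ)) := by
        rw [div_mul_eq_div_div_swap]
        rw [div_eq_mul_inv _ ((-1:ℝ)^n), inv_eq_of_mul_eq_one_left hsqr]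
        ring
      rw [hre, ← hm]
      ring

/-- For `j = 3,4`: `(R_j(t)(t+k))|_{t=-k} ∈ ℤ` for every integer `k`, and
`D_{b₄*-min{a_j,a₃*}-1}·(R_j(t)(t+k))'|_{t=-k} ∈ ℤ` for `a₃* ≤ k ≤ b₄*-1`. -/
theorem bricks_R3_R4_arithmetic
    (a₁ a₂ a₃ a₄ b₁ b₂ b₃ b₄ : ℤ)
    (h1 : max b₁ b₂ ≤ min (min a₁ a₂) (min a₃ a₄))
    (h2 : max (max a₁ a₂) (max a₃ a₄) < min b₃ b₄)
    (h3 : a₁ + a₂ + a₃ + a₄ ≤ b₁ + b₂ + b₃ + b₄ - 2)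
    (a₃s : ℤ)
    (ha₃s : a₃s = max (max (max (min a₁ a₂) (min a₁ a₃)) (max (min a₁ a₄) (min a₂ a₃)))
      (max (min a₂ a₄) (min a₃ a₄))) :
    ∀ aj bj : ℤ, ((aj, bj) = (a₃, b₃) ∨ (aj, bj) = (a₄, b₄)) →
      (∀ k : ℤ, ∃ m : ℤ, RdownK aj bj k (-(k : ℝ)) = (m : ℝ)) ∧
      (∀ k : ℤ, a₃s ≤ k → k ≤ max b₃ b₄ - 1 →
        ∃ m : ℤ, (Dlcm (max b₃ b₄ - min aj a₃s - 1).toNat : ℝ) *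
          deriv (RdownK aj bj k) (-(k : ℝ)) = (m : ℝ)) := by
  intro aj bj hj
  have habs : aj < bj ∧ bj ≤ max b₃ b₄ := by
    rcases hj with h | h <;> (rw [Prod.mk.injEq] at h; obtain ⟨rfl, rfl⟩ := h) <;>
      constructor <;> omega
  obtain ⟨hab, hbmax⟩ := habs
  have hamin : min aj a₃s ≤ aj := min_le_left _ _
  have hamin2 : min aj a₃s ≤ a₃s := min_le_right _ _
  refine ⟨fun k => val_int aj bj k hab, fun k hk1 hk2 => ?_⟩
  have hN : ((max b₃ b₄ - min aj a₃s - 1).toNat : ℤ) = max b₃ b₄ - min aj a₃s - 1 :=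
    Int.toNat_of_nonneg (by omega)
  exact der_int aj bj k hab _ (by omega) (by omega)
end

section
/- For every integer j ≥ 0 and every integer k with a₀ ≤ k ≤ b₀−1, the number (D_{b₀−a₀−1}^j / j!) · (d/dt)^j [R(t)(t+k)] evaluated at t = −k is an integer, where the function t ↦ R(t)(t+k) is understood with its removable singularity at t = −k removed. -/
open Finset

lemma prodP (j : ℕ) : ∏ i ∈ range j, (-1 - (i : ℝ)) = (-1) ^ j * j.factorial := by
  induction j with
  | zero => simp
  | succ j ih =>
    rw [Finset.prod_range_succ, ih, Nat.factorial_succ]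
    push_cast
    ring

lemma prod_range_sub (i : ℕ) : ∏ i' ∈ range i, ((i' : ℝ) - i) = (-1) ^ i * i.factorial := by
  rw [← Finset.prod_range_reflect]
  have h : ∀ j ∈ range i, ((i - 1 - j : ℕ) : ℝ) - i = -1 - (j : ℝ) := by
    intro j hj
    have hj' := mem_range.mp hj
    rw [Nat.cast_sub (by omega), Nat.cast_sub (by omega), Nat.cast_one]
    ring
  rw [Finset.prod_congr rfl h]
  exact prodP i

lemma fact_prod (i n : ℕ) (h : i < n) :
    ∏ i' ∈ (range n).erase i, ((i' : ℝ) - i)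
      = (-1) ^ i * (i.factorial * (n - 1 - i).factorial) := by
  induction n, h using Nat.le_induction with
  | base =>
    rw [Finset.range_add_one, Finset.erase_insert (by simp), prod_range_sub]
    simp
  | succ n hn ih =>
    rw [Finset.range_add_one, Finset.erase_insert_of_ne (by omega), Finset.prod_insert (by simp),
      ih]
    have h1 : n - 1 - i + 1 = n - i := by omega
    have h2 : (n + 1 - 1 - i) = n - i := by omega
    rw [h2, ← h1, Nat.factorial_succ]
    have h3 : ((n : ℝ) - i) = ((n - i : ℕ) : ℝ) := by
      rw [Nat.cast_sub (by omega)]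
    rw [h3, h1]
    push_cast
    ring

lemma iter_deriv_const_mul_inv (c : ℝ) (j : ℕ) :
    iteratedDeriv j (fun y : ℝ => c * y⁻¹) = fun y => c * (deriv^[j] Inv.inv y) := by
  rw [iteratedDeriv_eq_iterate]
  induction j with
  | zero => simp
  | succ j ih =>
    rw [Function.iterate_succ_apply', ih]
    funext y
    rw [Function.iterate_succ_apply']
    exact deriv_const_mul_field c

lemma iterated_inv_term (c d x : ℝ) (j : ℕ) :
    iteratedDeriv j (fun t => c * (t + d)⁻¹) x
      = c * ((-1) ^ j * (j.factorial : ℝ) * (x + d) ^ (-1 - (j : ℤ))) := by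
  rw [show iteratedDeriv j (fun t => c * (t + d)⁻¹) x
      = iteratedDeriv j (fun y : ℝ => c * y⁻¹) (x + d) from
    congrFun (iteratedDeriv_comp_add_const j (fun y : ℝ => c * y⁻¹) d) x]
  rw [iter_deriv_const_mul_inv]
  show c * deriv^[j] Inv.inv (x + d) = _
  rw [iter_deriv_inv]

lemma iteratedDeriv_const_fun (c x : ℝ) {j : ℕ} (hj : j ≠ 0) :
    iteratedDeriv j (fun _ : ℝ => c) x = 0 := by
  rw [iteratedDeriv_eq_iteratedFDeriv, iteratedFDeriv_const_of_ne hj]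
  simp

lemma iteratedDerivWithin_of_isOpen' {U : Set ℝ} {f : ℝ → ℝ} {n : ℕ} {x : ℝ}
    (hU : IsOpen U) (hx : x ∈ U) :
    iteratedDerivWithin n f U x = iteratedDeriv n f x := by
  rw [iteratedDerivWithin, iteratedDeriv, iteratedFDerivWithin_of_isOpen n hU hx]

lemma iteratedDeriv_add_of_isOpen {j : ℕ} {f g : ℝ → ℝ} {U : Set ℝ} (hU : IsOpen U)
    {x : ℝ} (hx : x ∈ U) (hf : ContDiffOn ℝ j f U) (hg : ContDiffOn ℝ j g U) :
    iteratedDeriv j (fun t => f t + g t) x = iteratedDeriv j f x + iteratedDeriv j g x := by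
  rw [← iteratedDerivWithin_of_isOpen' (f := fun t => f t + g t) hU hx,
    ← iteratedDerivWithin_of_isOpen' (f := f) hU hx,
    ← iteratedDerivWithin_of_isOpen' (f := g) hU hx]
  exact iteratedDerivWithin_add hx hU.uniqueDiffOn (hf x hx) (hg x hx)

lemma iteratedDeriv_sum_of_isOpen {j : ℕ} {ι : Type*} (s : Finset ι) (f : ι → ℝ → ℝ)
    {U : Set ℝ} (hU : IsOpen U) {x : ℝ} (hx : x ∈ U)
    (hf : ∀ i ∈ s, ContDiffOn ℝ j (f i) U) :
    iteratedDeriv j (fun t => ∑ i ∈ s, f i t) x = ∑ i ∈ s, iteratedDeriv j (f i) x := by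
  classical
  induction s using Finset.induction with
  | empty =>
    simp only [Finset.sum_empty]
    rcases Nat.eq_zero_or_pos j with h | h
    · subst h; simp
    · exact iteratedDeriv_const_fun 0 x (by omega)
  | insert _ _ hnotmem ih =>
    rename_i a s
    simp only [Finset.sum_insert hnotmem]
    rw [iteratedDeriv_add_of_isOpen hU hx (hf a (mem_insert_self a s))
      (ContDiffOn.sum fun i hi => hf i (mem_insert_of_mem hi)),
      ih fun i hi => hf i (mem_insert_of_mem hi)]


lemma PF (x : ℕ → ℝ) (hx : Function.Injective x) :
    ∀ (S : Finset ℕ), S.Nonempty → ∀ t : ℝ, (∀ i ∈ S, t + x i ≠ 0) →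
    (∏ i ∈ S, (t + x i))⁻¹
      = ∑ i ∈ S, (∏ i' ∈ S.erase i, (x i' - x i))⁻¹ * (t + x i)⁻¹ := by
  intro S hS
  induction hS using Finset.Nonempty.cons_induction with
  | singleton a => intro t ht; simp
  | cons a S ha hS ih =>
    intro t ht
    have hta : t + x a ≠ 0 := ht a (mem_cons_self a S)
    have htS : ∀ i ∈ S, t + x i ≠ 0 := fun i hi => ht i (mem_cons_of_mem hi)
    have hxa : ∀ i ∈ S, x i - x a ≠ 0 := by
      intro i hi
      have : i ≠ a := fun h => ha (h ▸ hi)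
      exact sub_ne_zero.mpr (fun h => this (hx h))
    -- IH at t
    have h1 := ih t htS
    -- IH at -(x a)
    have h2 := ih (-(x a)) (by
      intro i hi
      rw [neg_add_eq_sub]
      exact hxa i hi)
    have h2' : (∏ i ∈ S, (x i - x a))⁻¹
        = ∑ i ∈ S, (∏ i' ∈ S.erase i, (x i' - x i))⁻¹ * (x i - x a)⁻¹ := by
      rw [show (∏ i ∈ S, (x i - x a)) = ∏ i ∈ S, (-(x a) + x i) from
          Finset.prod_congr rfl fun i _ => by ring, h2]
      exact Finset.sum_congr rfl fun i _ => by rw [neg_add_eq_sub]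
    rw [Finset.prod_cons, Finset.sum_cons, mul_inv, h1, Finset.mul_sum]
    rw [Finset.erase_cons]
    rw [h2', Finset.sum_mul, ← Finset.sum_add_distrib]
    refine Finset.sum_congr rfl fun i hi => ?_
    have hi' : t + x i ≠ 0 := htS i hi
    have hxi : x i - x a ≠ 0 := hxa i hi
    have hia : i ≠ a := fun h => ha (h ▸ hi)
    have herase : (Finset.cons a S ha).erase i = insert a (S.erase i) := by
      rw [Finset.cons_eq_insert, Finset.erase_insert_of_ne (Ne.symm hia)]
    rw [herase, Finset.prod_insert (by simp [ha])]
    have hxa' : x a - x i ≠ 0 := by rw [← neg_sub]; exact neg_ne_zero.mpr hxi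
    have hprod : (∏ i' ∈ S.erase i, (x i' - x i)) ≠ 0 := by
      refine Finset.prod_ne_zero_iff.mpr fun i' hi' => ?_
      have hne : i' ≠ i := (Finset.mem_erase.mp hi').1
      exact sub_ne_zero.mpr fun h => hne (hx h)
    field_simp
    ring

lemma coeff_eq (i n : ℕ) (hi : i < n) :
    ((n - 1).factorial : ℝ) * (∏ i' ∈ (range n).erase i, ((i' : ℝ) - i))⁻¹
      = (((-1 : ℤ) ^ i * ((n - 1).choose i) : ℤ) : ℝ) := by
  rw [fact_prod i n hi]
  have hch : (n - 1).factorial = (n - 1).choose i * (i.factorial * (n - 1 - i).factorial) := by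
    rw [← Nat.choose_mul_factorial_mul_factorial (by omega : i ≤ n - 1)]; ring
  have hA : ((i.factorial * (n - 1 - i).factorial : ℕ) : ℝ) ≠ 0 := by positivity
  push_cast at hA ⊢
  rw [hch, mul_inv, ← inv_pow, inv_neg, inv_one]
  push_cast
  field_simp

lemma decomp (a b k : ℤ) (h2 : a < b) :
    ∃ C : ℤ, ∀ t : ℝ,
      (∀ i ∈ (Finset.range (b - a).toNat).filter (fun i : ℕ => a + (i : ℤ) ≠ k),
        t + ((a : ℝ) + (i : ℝ)) ≠ 0) →
      RdownK a b k t
        = (C : ℝ) + ∑ i ∈ (Finset.range (b - a).toNat).filter (fun i : ℕ => a + (i : ℤ) ≠ k),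
            ((((-1 : ℤ) ^ i * ((b - a - 1).toNat.choose i) : ℤ) : ℝ) * ((k : ℝ) - a - i))
              * (t + ((a : ℝ) + i))⁻¹ := by
  classical
  set n := (b - a).toNat with hn
  have hn1 : 1 ≤ n := by omega
  have hnm1 : (b - a - 1).toNat = n - 1 := by omega
  set x : ℕ → ℝ := fun i => (a : ℝ) + i with hxdef
  have hxinj : Function.Injective x := by
    intro i i' h
    simp only [hxdef, add_right_inj, Nat.cast_inj] at h
    exact h
  set S' := (Finset.range n).filter (fun i : ℕ => a + (i : ℤ) ≠ k) with hS'def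
  rw [hnm1]
  by_cases hin : a ≤ k ∧ k < b
  · -- inside case
    set i0 := (k - a).toNat with hi0def
    have hi0 : a + (i0 : ℤ) = k := by omega
    have hi0n : i0 < n := by omega
    have hS' : S' = (range n).erase i0 := by
      ext i
      simp only [hS'def, mem_filter, mem_range, mem_erase]
      omega
    by_cases hne : S'.Nonempty
    · refine ⟨0, fun t ht => ?_⟩
      have ht' : ∀ i ∈ S', t + x i ≠ 0 := fun i hi => ht i hi
      have hPF := PF x hxinj S' hne t ht'
      unfold RdownK
      rw [if_pos hin, ← hn, ← hS'def, hnm1]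
      have hprodeq : ∏ i ∈ S', (t + (a : ℝ) + i) = ∏ i ∈ S', (t + x i) :=
        Finset.prod_congr rfl fun i _ => by rw [hxdef]; ring
      rw [hprodeq, div_eq_mul_inv, mul_one, hPF, Finset.mul_sum]
      rw [Int.cast_zero, zero_add]
      refine Finset.sum_congr rfl fun i hi => ?_
      have hii0 : i ≠ i0 := by
        have := (mem_filter.mp (hS'def ▸ hi)).2
        omega
      have hiin : i < n := mem_range.mp (mem_filter.mp (hS'def ▸ hi)).1
      have hxsub : ∀ i' : ℕ, x i' - x i = (i' : ℝ) - i := by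
        intro i'; rw [hxdef]; push_cast; ring
      have herase : S'.erase i = ((range n).erase i).erase i0 := by
        rw [hS', Finset.erase_right_comm]
      have hi0mem : i0 ∈ (range n).erase i :=
        mem_erase.mpr ⟨Ne.symm hii0, mem_range.mpr hi0n⟩
      have hmul : ((i0 : ℝ) - i) * ∏ i' ∈ ((range n).erase i).erase i0, ((i' : ℝ) - i)
          = ∏ i' ∈ (range n).erase i, ((i' : ℝ) - i) :=
        Finset.mul_prod_erase _ (fun i' : ℕ => (i' : ℝ) - (i : ℝ)) hi0mem
      have hi0i : ((i0 : ℝ) - i) ≠ 0 := by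
        simp only [ne_eq, sub_eq_zero, Nat.cast_inj]
        omega
      have hki : (k : ℝ) - a - i = (i0 : ℝ) - i := by
        have hk' : (k : ℝ) = (a : ℝ) + (i0 : ℝ) := by exact_mod_cast hi0.symm
        rw [hk']; ring
      have hfull : (∏ i' ∈ (range n).erase i, ((i' : ℝ) - i)) ≠ 0 := by
        rw [fact_prod i n hiin]
        positivity
      have hprod2 : (∏ i' ∈ S'.erase i, (x i' - x i))⁻¹
          = ((i0 : ℝ) - i) * (∏ i' ∈ (range n).erase i, ((i' : ℝ) - i))⁻¹ := by
        rw [herase, Finset.prod_congr rfl fun i' _ => hxsub i']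
        rw [← hmul, mul_inv, ← mul_assoc, mul_inv_cancel₀ hi0i, one_mul]
      rw [hprod2, hki]
      simp only [hxdef]
      linear_combination (((i0 : ℝ) - i) * (t + ((a : ℝ) + i))⁻¹) * coeff_eq i n hiin
    · -- S' empty, n = 1
      have hS'e : S' = ∅ := Finset.not_nonempty_iff_eq_empty.mp hne
      have hn1' : n = 1 := by
        by_contra hc
        have h2n : 2 ≤ n := by omega
        have : (if i0 = 0 then 1 else 0) ∈ S' := by
          rw [hS']
          by_cases h0 : i0 = 0 <;> simp [h0, mem_erase] <;> omega
        rw [hS'e] at this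
        simp at this
      refine ⟨1, fun t ht => ?_⟩
      unfold RdownK
      rw [if_pos hin, ← hn, ← hS'def, hS'e, hnm1, hn1']
      simp
  · -- outside case
    have hS' : S' = range n := by
      ext i
      simp only [hS'def, mem_filter, mem_range]
      omega
    refine ⟨∑ i ∈ range n, (-1 : ℤ) ^ i * ((n - 1).choose i), fun t ht => ?_⟩
    have hne : (range n).Nonempty := ⟨0, mem_range.mpr (by omega)⟩
    have ht' : ∀ i ∈ range n, t + x i ≠ 0 := fun i hi => ht i (hS' ▸ hi)
    have hPF := PF x hxinj (range n) hne t ht'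
    unfold RdownK
    rw [if_neg hin, ← hn, ← hS'def, hnm1, hS']
    have hprodeq : ∏ i ∈ range n, (t + (a : ℝ) + i) = ∏ i ∈ range n, (t + x i) :=
      Finset.prod_congr rfl fun i _ => by rw [hxdef]; ring
    rw [hprodeq, div_eq_mul_inv, hPF, Finset.mul_sum]
    have key : ∀ i ∈ range n,
        ((n - 1).factorial : ℝ) * (t + (k : ℝ)) *
            ((∏ i' ∈ (range n).erase i, (x i' - x i))⁻¹ * (t + x i)⁻¹)
          = (((-1 : ℤ) ^ i * ((n - 1).choose i) : ℤ) : ℝ)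
            + ((((-1 : ℤ) ^ i * ((n - 1).choose i) : ℤ) : ℝ) * ((k : ℝ) - a - i))
              * (t + ((a : ℝ) + i))⁻¹ := by
      intro i hi
      have hiin : i < n := mem_range.mp hi
      have hxsub : ∀ i' : ℕ, x i' - x i = (i' : ℝ) - i := by
        intro i'; rw [hxdef]; push_cast; ring
      have hti : t + x i ≠ 0 := ht' i hi
      rw [Finset.prod_congr rfl fun i' _ => hxsub i']
      have hw := coeff_eq i n hiin
      have hsplit : (t + (k : ℝ)) * (t + x i)⁻¹ = 1 + ((k : ℝ) - a - i) * (t + x i)⁻¹ := by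
        rw [hxdef] at hti ⊢
        field_simp
        ring
      calc ((n - 1).factorial : ℝ) * (t + (k : ℝ)) *
            ((∏ i' ∈ (range n).erase i, ((i' : ℝ) - i))⁻¹ * (t + x i)⁻¹)
          = (((n - 1).factorial : ℝ) * (∏ i' ∈ (range n).erase i, ((i' : ℝ) - i))⁻¹)
              * ((t + (k : ℝ)) * (t + x i)⁻¹) := by ring
        _ = (((-1 : ℤ) ^ i * ((n - 1).choose i) : ℤ) : ℝ)
              * (1 + ((k : ℝ) - a - i) * (t + x i)⁻¹) := by rw [hw, hsplit]
        _ = _ := by rw [hxdef]; ring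
    rw [Finset.sum_congr rfl key, Finset.sum_add_distrib]
    push_cast
    ring


/-- For `a₀ ≤ a < b ≤ b₀`, every `j ≥ 0` and every integer `k` with `a₀ ≤ k ≤ b₀-1`:
`(D_{b₀-a₀-1}^j/j!)·(R(t)(t+k))^{(j)}|_{t=-k} ∈ ℤ`. -/
theorem brick_Rdown_derivatives_integral (a b a₀ b₀ : ℤ)
    (h1 : a₀ ≤ a) (h2 : a < b) (h3 : b ≤ b₀) (j : ℕ) (k : ℤ)
    (hk1 : a₀ ≤ k) (hk2 : k ≤ b₀ - 1) :
    ∃ m : ℤ, (Dlcm (b₀ - a₀ - 1).toNat : ℝ) ^ j / (j.factorial : ℝ) *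
      iteratedDeriv j (RdownK a b k) (-(k : ℝ)) = (m : ℝ) := by
  classical
  set N := (b₀ - a₀ - 1).toNat with hN
  set n := (b - a).toNat with hn
  have hn1 : 1 ≤ n := by omega
  set S' := (Finset.range n).filter (fun i : ℕ => a + (i : ℤ) ≠ k) with hS'def
  obtain ⟨C, hC⟩ := decomp a b k h2
  set w : ℕ → ℤ := fun i => (-1 : ℤ) ^ i * ((b - a - 1).toNat.choose i) with hw
  set d : ℕ → ℤ := fun i => a + i - k with hd
  set q : ℕ → ℤ := fun i => (Dlcm N : ℤ) / d i with hq
  have hdprop : ∀ i ∈ S', d i ≠ 0 ∧ d i ∣ (Dlcm N : ℤ) := by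
    intro i hi
    have hiin : i < n := mem_range.mp (mem_filter.mp hi).1
    have hik : a + (i : ℤ) ≠ k := (mem_filter.mp hi).2
    have hd0 : d i ≠ 0 := by simp only [hd]; omega
    have h1' : 1 ≤ (d i).natAbs := by simp only [hd]; omega
    have h2' : (d i).natAbs ≤ N := by simp only [hd, hN]; omega
    have hmem : (d i).natAbs ∈ Finset.Icc 1 N := Finset.mem_Icc.mpr ⟨h1', h2'⟩
    have hdvd : (d i).natAbs ∣ Dlcm N := Finset.dvd_lcm hmem
    exact ⟨hd0, Int.natAbs_dvd.mp (Int.natCast_dvd_natCast.mpr hdvd)⟩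
  have hqd : ∀ i ∈ S', d i * q i = (Dlcm N : ℤ) := by
    intro i hi
    exact Int.mul_ediv_cancel' (hdprop i hi).2
  -- the open set of non-poles
  set U := {t : ℝ | ∀ i ∈ S', t + ((a : ℝ) + i) ≠ 0} with hU
  have hUopen : IsOpen U := by
    have hUeq : U = ⋂ i ∈ S', {t : ℝ | t + ((a : ℝ) + i) ≠ 0} := by
      ext t; simp [hU, Set.mem_iInter]
    rw [hUeq]
    refine isOpen_biInter_finset fun i _ => ?_
    exact isOpen_compl_singleton.preimage (continuous_id.add continuous_const)
  have hkU : -(k : ℝ) ∈ U := by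
    intro i hi
    have hik : a + (i : ℤ) ≠ k := (mem_filter.mp hi).2
    intro hcontra
    have : ((a + i - k : ℤ) : ℝ) = 0 := by push_cast; linarith
    have : (a + (i : ℤ) - k) = 0 := by exact_mod_cast this
    omega
  have hfg : RdownK a b k =ᶠ[nhds (-(k : ℝ))]
      (fun t => (C : ℝ) + ∑ i ∈ S', ((w i : ℝ) * ((k : ℝ) - a - i)) * (t + ((a : ℝ) + i))⁻¹) := by
    filter_upwards [hUopen.mem_nhds hkU] with t ht
    exact hC t ht
  rw [Filter.EventuallyEq.iteratedDeriv_eq j hfg]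
  have hterm : ∀ i ∈ S',
      ContDiffOn ℝ j (fun t : ℝ => ((w i : ℝ) * ((k : ℝ) - a - i)) * (t + ((a : ℝ) + i))⁻¹) U := by
    intro i hi
    refine ContDiffOn.mul contDiffOn_const ?_
    exact ContDiffOn.inv (contDiff_id.add contDiff_const).contDiffOn (fun t ht => ht i hi)
  have hstep : iteratedDeriv j
        (fun t => (C : ℝ) + ∑ i ∈ S', ((w i : ℝ) * ((k : ℝ) - a - i)) * (t + ((a : ℝ) + i))⁻¹)
        (-(k : ℝ))
      = iteratedDeriv j (fun _ : ℝ => (C : ℝ)) (-(k : ℝ)) +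
        iteratedDeriv j
          (fun t => ∑ i ∈ S', ((w i : ℝ) * ((k : ℝ) - a - i)) * (t + ((a : ℝ) + i))⁻¹)
          (-(k : ℝ)) :=
    iteratedDeriv_add_of_isOpen hUopen hkU contDiffOn_const (ContDiffOn.sum hterm)
  have hsum : iteratedDeriv j
        (fun t => ∑ i ∈ S', ((w i : ℝ) * ((k : ℝ) - a - i)) * (t + ((a : ℝ) + i))⁻¹) (-(k : ℝ))
      = ∑ i ∈ S', iteratedDeriv j
          (fun t => ((w i : ℝ) * ((k : ℝ) - a - i)) * (t + ((a : ℝ) + i))⁻¹) (-(k : ℝ)) :=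
    iteratedDeriv_sum_of_isOpen S' _ hUopen hkU hterm
  have hconst : iteratedDeriv j (fun _ : ℝ => (C : ℝ)) (-(k : ℝ))
      = if j = 0 then (C : ℝ) else 0 := by
    rcases Nat.eq_zero_or_pos j with h | h
    · subst h; simp
    · rw [iteratedDeriv_const_fun _ _ (by omega), if_neg (by omega)]
  rw [hstep, hsum, hconst]
  refine ⟨(if j = 0 then C else 0) + ∑ i ∈ S', (-(w i)) * (-(q i)) ^ j, ?_⟩
  rw [mul_add, Int.cast_add, Int.cast_sum]
  congr 1
  · rcases Nat.eq_zero_or_pos j with h | h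
    · subst h; simp
    · rw [if_neg (by omega), if_neg (by omega)]; simp
  · rw [Finset.mul_sum]
    refine Finset.sum_congr rfl fun i hi => ?_
    rw [iterated_inv_term]
    have hdi : ((d i : ℤ) : ℝ) ≠ 0 := Int.cast_ne_zero.mpr (hdprop i hi).1
    have hDeq : ((Dlcm N : ℕ) : ℝ) = ((d i : ℤ) : ℝ) * ((q i : ℤ) : ℝ) := by
      exact_mod_cast congrArg (Int.cast : ℤ → ℝ) (hqd i hi).symm
    have hkd : (k : ℝ) - a - i = -((d i : ℤ) : ℝ) := by
      simp only [hd]; push_cast; ring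
    have hxd : -(k : ℝ) + ((a : ℝ) + i) = ((d i : ℤ) : ℝ) := by
      simp only [hd]; push_cast; ring
    have hz : ((d i : ℤ) : ℝ) ^ (-1 - (j : ℤ)) = (((d i : ℤ) : ℝ) ^ (j + 1))⁻¹ := by
      rw [show (-1 - (j : ℤ)) = -((j + 1 : ℕ) : ℤ) by push_cast; ring, zpow_neg, zpow_natCast]
    rw [hkd, hxd, hz, hDeq]
    have hfac : (j.factorial : ℝ) ≠ 0 := by positivity
    push_cast
    rw [pow_succ]
    field_simp
    ring
end
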